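/- Let 0 < α < 1/2, let θ*_A be a unit vector in ℝ², let s ∈ {−1, 1}, and define θ'_D = s · R θ*_A and θ'_A = (√(1 − 2α) · θ*_A − α s · R θ*_A)/(1 − α). Then arccos(⟪θ'_A, θ'_D⟫) = arcsin(α/(1−α)) + π/2; that is, the equilibrium strategies of the two players make an obtuse angle exceeding π/2 by exactly arcsin(α/(1−α)). -/

import Mathlib

open Real

/-- Rotation by `π/2`: `R(x, y) = (−y, x)`. -/
noncomputable def Rot (x : EuclideanSpace ℝ (Fin 2)) : EuclideanSpace ℝ (Fin 2) :=
  (WithLp.equiv 2 (Fin 2 → ℝ)).symm ![-(x 1), x 0]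

/-!
The rotation `R` is an isometry with `⟪θ, Rθ⟫ = 0`, so `(θ*_A, Rθ*_A)` is an orthonormal basis.
In it `θ'_D = s·Rθ*_A` only sees the second coordinate of `θ'_A`, giving
`⟪θ'_A, θ'_D⟫ = -s²α/(1-α) = -α/(1-α)`, and `arccos (-x) = π - arccos x = arcsin x + π/2`.
-/

lemma inner_self_rot (x : EuclideanSpace ℝ (Fin 2)) : inner ℝ x (Rot x) = 0 := by
  simp only [Rot, PiLp.inner_apply, Fin.sum_univ_two, WithLp.equiv_symm_apply,
    Matrix.cons_val_zero, Matrix.cons_val_one, RCLike.inner_apply, conj_trivial]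
  ring

lemma inner_rot_rot (x : EuclideanSpace ℝ (Fin 2)) :
    inner ℝ (Rot x) (Rot x) = inner ℝ x x := by
  simp only [Rot, PiLp.inner_apply, Fin.sum_univ_two, WithLp.equiv_symm_apply,
    Matrix.cons_val_zero, Matrix.cons_val_one, RCLike.inner_apply, conj_trivial]
  ring

lemma Real.arccos_neg_eq_arcsin_add_pi_div_two (x : ℝ) : arccos (-x) = arcsin x + π / 2 := by
  rw [arccos_neg, arccos_eq_pi_div_two_sub_arcsin]
  ring

lemma inner_smul_sub_smul_rot_smul_rot (c a b s : ℝ) {x : EuclideanSpace ℝ (Fin 2)}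
    (hx : ‖x‖ = 1) : inner ℝ (c • (a • x - b • Rot x)) (s • Rot x) = -(c * b * s) := by
  rw [real_inner_smul_left, inner_sub_left, real_inner_smul_left, real_inner_smul_left,
    real_inner_smul_right, real_inner_smul_right, inner_self_rot, inner_rot_rot,
    real_inner_self_eq_norm_sq, hx]
  ring

theorem stmt_14_general (α : ℝ)
    (θAstar : EuclideanSpace ℝ (Fin 2)) (hAs : ‖θAstar‖ = 1)
    (s : ℝ) (hs : s = -1 ∨ s = 1) :
    Real.arccos
        (inner ℝ
          ((1 - α)⁻¹ • (Real.sqrt (1 - 2 * α) • θAstar - (α * s) • Rot θAstar))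
          (s • Rot θAstar) : ℝ) =
      Real.arcsin (α / (1 - α)) + Real.pi / 2 := by
  have hs2 : s * s = 1 := by rcases hs with rfl | rfl <;> norm_num
  have hcos : inner ℝ ((1 - α)⁻¹ • (Real.sqrt (1 - 2 * α) • θAstar - (α * s) • Rot θAstar))
      (s • Rot θAstar) = -(α / (1 - α)) := by
    rw [inner_smul_sub_smul_rot_smul_rot _ _ _ _ hAs, mul_assoc, mul_assoc, hs2]
    ring
  rw [hcos, arccos_neg_eq_arcsin_add_pi_div_two]

/-- Theorem 2, item 2: the equilibrium strategies make angle `arcsin(α/(1−α)) + π/2`. -/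
theorem stmt_14 (α : ℝ) (hα : 0 < α) (hα' : α < 1 / 2)
    (θAstar : EuclideanSpace ℝ (Fin 2)) (hAs : ‖θAstar‖ = 1)
    (s : ℝ) (hs : s = -1 ∨ s = 1) :
    Real.arccos
        (inner ℝ
          ((1 - α)⁻¹ • (Real.sqrt (1 - 2 * α) • θAstar - (α * s) • Rot θAstar))
          (s • Rot θAstar) : ℝ) =
      Real.arcsin (α / (1 - α)) + Real.pi / 2 :=
  stmt_14_general α θAstar hAs s hs
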